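/- arXiv:1707.03892 — 2 statements merged into one kernel-verified Lean document; each statement's English description precedes it below -/
import Mathlib

section
/- For every n ≥ 3k, the graph G_n obtained from K_n by deleting all edges inside a fixed (n−2k+1)-vertex subset has minimum degree 2k−1, at least 3k vertices, but does not contain k vertex-disjoint cycles. -/
/-!
`A` is an independent set of `G_n`, and every edge of a cycle has an endpoint outside an
independent set, so each cycle meets at least two vertices outside `A`. Disjoint cycles meet
disjoint sets of such vertices, and there are only `n - |A| = 2k - 1` of them. The vertices of `A`
have the smallest degree, `2k - 1`.
-/

/-- `G` contains `k` pairwise vertex-disjoint cycles. -/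
def HasDisjointCycles {V : Type*} (G : SimpleGraph V) (k : ℕ) : Prop :=
  ∃ c : Fin k → (v : V) × G.Walk v v,
    (∀ i, (c i).2.IsCycle) ∧
    ∀ i j, i ≠ j → List.Disjoint (c i).2.support (c j).2.support

/-- The graph `K_n - E(K_{n-2k+1})`: the complete graph on `n` vertices with all edges
inside the fixed set `A` deleted. -/
def GnGraph (n : ℕ) (A : Finset (Fin n)) : SimpleGraph (Fin n) where
  Adj v w := v ≠ w ∧ ¬(v ∈ A ∧ w ∈ A)
  symm := by
    constructor
    intro v w h
    exact ⟨h.1.symm, fun hc => h.2 ⟨hc.2, hc.1⟩⟩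
  loopless := by
    constructor
    intro v h
    exact h.1 rfl

instance (n : ℕ) (A : Finset (Fin n)) : DecidableRel (GnGraph n A).Adj :=
  fun _ _ => inferInstanceAs (Decidable (_ ∧ _))

open Finset

namespace SimpleGraph

variable {V : Type*} {G : SimpleGraph V} {s : Set V}

lemma IsIndepSet.notMem_or_notMem_of_adj (hs : G.IsIndepSet s) {x y : V} (h : G.Adj x y) :
    x ∉ s ∨ y ∉ s := by
  by_contra! hxy
  exact hs hxy.1 hxy.2 h.ne h

namespace Walk

variable {u : V} {c : G.Walk u u}

lemma IsCycle.exists_pair_notMem_of_start_mem (hc : c.IsCycle) (hs : G.IsIndepSet s)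
    (hu : u ∈ s) : ∃ x ∈ c.support, ∃ y ∈ c.support, x ≠ y ∧ x ∉ s ∧ y ∉ s := by
  have hsnd := (hs.notMem_or_notMem_of_adj (c.adj_snd hc.not_nil)).resolve_left (not_not.2 hu)
  have hpen := (hs.notMem_or_notMem_of_adj (c.adj_penultimate hc.not_nil)).resolve_right
    (not_not.2 hu)
  exact ⟨_, c.getVert_mem_support 1, _, c.getVert_mem_support _, hc.snd_ne_penultimate,
    hsnd, hpen⟩

lemma IsCycle.exists_pair_notMem (hc : c.IsCycle) (hs : G.IsIndepSet s) :
    ∃ x ∈ c.support, ∃ y ∈ c.support, x ≠ y ∧ x ∉ s ∧ y ∉ s := by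
  by_cases hu : u ∈ s
  · exact hc.exists_pair_notMem_of_start_mem hs hu
  by_cases hsnd : c.snd ∈ s
  · classical
    have hmem := c.getVert_mem_support 1
    simpa only [mem_support_rotate_iff] using
      (hc.rotate hmem).exists_pair_notMem_of_start_mem hs hsnd
  · exact ⟨u, c.start_mem_support, c.snd, c.getVert_mem_support 1, (c.adj_snd hc.not_nil).ne,
      hu, hsnd⟩

end Walk

end SimpleGraph

open SimpleGraph

lemma HasDisjointCycles.two_mul_le_card_compl {V : Type*} [Fintype V] [DecidableEq V]
    {G : SimpleGraph V} {k : ℕ} {s : Finset V} (h : HasDisjointCycles G k)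
    (hs : G.IsIndepSet s) : 2 * k ≤ sᶜ.card := by
  obtain ⟨c, hcyc, hdisj⟩ := h
  set f : Fin k → Finset V := fun i => (c i).2.support.toFinset \ s
  have hf : ∀ i, 2 ≤ (f i).card := fun i => by
    obtain ⟨x, hx, y, hy, hxy, hxs, hys⟩ := (hcyc i).exists_pair_notMem hs
    exact one_lt_card.2 ⟨x, by simpa [f, hx] using hxs, y, by simpa [f, hy] using hys, hxy⟩
  have hf_disj : ((univ : Finset (Fin k)) : Set (Fin k)).PairwiseDisjoint f := fun i _ j _ hij =>
    Finset.disjoint_left.2 fun x hxi hxj => by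
      simp only [f, mem_sdiff, List.mem_toFinset] at hxi hxj
      exact hdisj i j hij hxi.1 hxj.1
  calc 2 * k = ∑ _i : Fin k, 2 := by simp [mul_comm]
    _ ≤ ∑ i, (f i).card := sum_le_sum fun i _ => hf i
    _ = (univ.biUnion f).card := (card_biUnion hf_disj).symm
    _ ≤ sᶜ.card := card_le_card fun x hx => by
      obtain ⟨i, -, hx⟩ := mem_biUnion.1 hx
      exact mem_compl.2 (mem_sdiff.1 hx).2

section GnGraph

variable {n : ℕ} {A : Finset (Fin n)} {v : Fin n}

lemma isIndepSet_gnGraph : (GnGraph n A).IsIndepSet A :=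
  fun _ hv _ hw _ h => h.2 ⟨hv, hw⟩

lemma neighborFinset_gnGraph_of_mem (hv : v ∈ A) : (GnGraph n A).neighborFinset v = Aᶜ := by
  ext w
  simp only [mem_neighborFinset, mem_compl]
  exact ⟨fun h hw => h.2 ⟨hv, hw⟩, fun hw => ⟨fun h => hw (h ▸ hv), fun h => hw h.2⟩⟩

lemma neighborFinset_gnGraph_of_notMem (hv : v ∉ A) :
    (GnGraph n A).neighborFinset v = {v}ᶜ := by
  ext w
  simp only [mem_neighborFinset, mem_compl, mem_singleton]
  exact ⟨fun h hw => h.1 hw.symm, fun hw => ⟨fun h => hw h.symm, fun h => hv h.1⟩⟩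

lemma minDegree_gnGraph (hA : A.Nonempty) : (GnGraph n A).minDegree = Aᶜ.card := by
  obtain ⟨a, ha⟩ := hA
  have : Nonempty (Fin n) := ⟨a⟩
  refine le_antisymm ?_ (le_minDegree_of_forall_le_degree _ _ fun v => ?_)
  · rw [← neighborFinset_gnGraph_of_mem ha, card_neighborFinset_eq_degree]
    exact minDegree_le_degree _ a
  rw [← card_neighborFinset_eq_degree]
  by_cases hv : v ∈ A
  · rw [neighborFinset_gnGraph_of_mem hv]
  · have : 1 ≤ A.card := card_pos.2 ⟨a, ha⟩
    rw [neighborFinset_gnGraph_of_notMem hv, card_compl, card_compl, card_singleton]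
    omega

end GnGraph

/-- For every `n ≥ 3k`, the graph `K_n - E(K_{n-2k+1})` has minimum degree `2k-1`,
at least `3k` vertices, but no `k` vertex-disjoint cycles. -/
theorem dirac_erdos_example (k n : ℕ) (hk : 1 ≤ k) (hn : 3 * k ≤ n)
    (A : Finset (Fin n)) (hA : A.card = n - 2 * k + 1) :
    (GnGraph n A).minDegree = 2 * k - 1 ∧
    3 * k ≤ Fintype.card (Fin n) ∧
    ¬ HasDisjointCycles (GnGraph n A) k := by
  have hAc : Aᶜ.card = 2 * k - 1 := by
    rw [card_compl, Fintype.card_fin, hA]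
    omega
  refine ⟨?_, by simpa using hn, fun h => ?_⟩
  · rw [minDegree_gnGraph (card_pos.1 (by omega)), hAc]
  · have := h.two_mul_le_card_compl isIndepSet_gnGraph
    omega
end

section
/- For every k ≥ 2, the graph G_0(k) obtained from K_{3k−1} by removing all edges inside a fixed k-element subset S and adding a new vertex x joined exactly to the vertices of S satisfies |G_0(k)| = 3k and |H_k(G_0(k))| − |L_k(G_0(k))| = 3k − 2, but G_0(k) does not contain k vertex-disjoint cycles. -/
/-- `H_k(G)`: the set of vertices of degree at least `2k`. -/
def highSet {V : Type*} [Fintype V] (G : SimpleGraph V) [DecidableRel G.Adj] (k : ℕ) :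
    Finset V :=
  Finset.univ.filter fun v => 2 * k ≤ G.degree v

/-- `L_k(G)`: the set of vertices of degree at most `2k - 2`. -/
def lowSet {V : Type*} [Fintype V] (G : SimpleGraph V) [DecidableRel G.Adj] (k : ℕ) :
    Finset V :=
  Finset.univ.filter fun v => G.degree v ≤ 2 * k - 2

/-- The graph `G₀(k)`: take `K_{3k-1}`, delete all edges inside a `k`-set `S`, and add a
new vertex `none` joined exactly to the vertices of `S`. -/
def G0 (k : ℕ) (S : Finset (Fin (3 * k - 1))) : SimpleGraph (Option (Fin (3 * k - 1))) where
  Adj a b :=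
    match a, b with
    | some v, some w => v ≠ w ∧ ¬(v ∈ S ∧ w ∈ S)
    | some v, none => v ∈ S
    | none, some w => w ∈ S
    | none, none => False
  symm := by
    constructor
    intro a b h
    cases a <;> cases b <;> simp_all <;> tauto
  loopless := by
    constructor
    intro a h
    cases a <;> simp_all

instance (k : ℕ) (S : Finset (Fin (3 * k - 1))) : DecidableRel (G0 k S).Adj := fun a b =>
  match a, b with
  | some _, some _ => inferInstanceAs (Decidable (_ ∧ _))
  | some _, none => inferInstanceAs (Decidable (_ ∈ _))
  | none, some _ => inferInstanceAs (Decidable (_ ∈ _))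
  | none, none => inferInstanceAs (Decidable False)

/-!
In `G₀(k)` the new vertex `x = none` has degree `k`, the vertices of `S` have degree `2k` and the
remaining ones degree `3k - 2 ≥ 2k`, so `H_k = V ∖ {x}` and `L_k = {x}`. Since every cycle has at
least three vertices, `k` disjoint cycles in a graph on `3k` vertices must be triangles covering
all vertices, in particular `x`; but the neighbourhood `S` of `x` is independent.
-/

namespace SimpleGraph

variable {V : Type*} {G : SimpleGraph V}

lemma Walk.exists_adj_adj_adj_of_length_eq_three {u x : V} (p : G.Walk u u)
    (hp : p.length = 3) (hx : x ∈ p.support) : ∃ a b, G.Adj x a ∧ G.Adj a b ∧ G.Adj b x := by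
  match p, hp with
  | .cons h₁ (.cons h₂ (.cons h₃ .nil)), _ =>
    simp only [Walk.support_cons, Walk.support_nil, List.mem_cons, List.not_mem_nil,
      or_false] at hx
    rcases hx with rfl | rfl | rfl | rfl
    exacts [⟨_, _, h₁, h₂, h₃⟩, ⟨_, _, h₂, h₃, h₁⟩, ⟨_, _, h₃, h₁, h₂⟩, ⟨_, _, h₁, h₂, h₃⟩]

lemma Walk.IsCycle.card_toFinset_support_tail [DecidableEq V] {u : V} {p : G.Walk u u}
    (hp : p.IsCycle) : p.support.tail.toFinset.card = p.length := by
  rw [List.toFinset_card_of_nodup hp.support_nodup, List.length_tail, Walk.length_support,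
    Nat.add_sub_cancel]

end SimpleGraph

lemma HasDisjointCycles.exists_length_eq_three_mem_support {V : Type*} [Fintype V]
    {G : SimpleGraph V} {k : ℕ}
    (h : HasDisjointCycles G k) (hV : Fintype.card V ≤ 3 * k) (x : V) :
    ∃ (u : V) (p : G.Walk u u), p.length = 3 ∧ x ∈ p.support := by
  classical
  obtain ⟨c, hcyc, hdisj⟩ := h
  set T : Fin k → Finset V := fun i => (c i).2.support.tail.toFinset
  have hT : ∀ i, (T i).card = (c i).2.length := fun i => (hcyc i).card_toFinset_support_tail
  have hT3 : ∀ i ∈ Finset.univ, 3 ≤ (T i).card := fun i _ => hT i ▸ (hcyc i).three_le_length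
  have hcard : (Finset.univ.biUnion T).card = ∑ i, (T i).card :=
    Finset.card_biUnion fun i _ j _ hij => Finset.disjoint_left.mpr fun _ hi hj =>
      hdisj i j hij (List.mem_of_mem_tail (List.mem_toFinset.mp hi))
        (List.mem_of_mem_tail (List.mem_toFinset.mp hj))
  have hsum : ∑ i, (T i).card = ∑ _i : Fin k, 3 := by
    refine le_antisymm ?_ (Finset.sum_le_sum hT3)
    calc ∑ i, (T i).card = (Finset.univ.biUnion T).card := hcard.symm
      _ ≤ Fintype.card V := Finset.card_le_univ _
      _ ≤ ∑ _i : Fin k, 3 := by simpa [mul_comm] using hV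
  have hcover : Finset.univ.biUnion T = Finset.univ :=
    Finset.eq_univ_of_card _ (le_antisymm (Finset.card_le_univ _) (by simpa [hcard, hsum,
      mul_comm] using hV))
  obtain ⟨i, -, hi⟩ := Finset.mem_biUnion.mp (hcover ▸ Finset.mem_univ x)
  refine ⟨_, (c i).2, ?_, List.mem_of_mem_tail (List.mem_toFinset.mp hi)⟩
  rw [← hT, (Finset.sum_eq_sum_iff_of_le hT3).mp hsum.symm i (Finset.mem_univ i)]

section G0

variable {k : ℕ} {S : Finset (Fin (3 * k - 1))} {v w : Fin (3 * k - 1)}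

@[simp] lemma G0_adj_some_some : (G0 k S).Adj (some v) (some w) ↔ v ≠ w ∧ ¬(v ∈ S ∧ w ∈ S) :=
  Iff.rfl

@[simp] lemma G0_adj_some_none : (G0 k S).Adj (some v) none ↔ v ∈ S := Iff.rfl

@[simp] lemma G0_adj_none_some : (G0 k S).Adj none (some w) ↔ w ∈ S := Iff.rfl

lemma G0_neighborFinset_none : (G0 k S).neighborFinset none = S.map .some := by
  ext (_ | w) <;> simp

lemma G0_degree_none (hS : S.card = k) : (G0 k S).degree none = k := by
  rw [← SimpleGraph.card_neighborFinset_eq_degree, G0_neighborFinset_none, Finset.card_map, hS]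

lemma G0_two_mul_le_degree_some (hk : 2 ≤ k) (hS : S.card = k) (v : Fin (3 * k - 1)) :
    2 * k ≤ (G0 k S).degree (some v) := by
  rw [← SimpleGraph.card_neighborFinset_eq_degree]
  by_cases hv : v ∈ S
  · have hsub : insert none (Sᶜ.map .some) ⊆ (G0 k S).neighborFinset (some v) := by
      rintro (_ | w) hw <;> simp_all
      exact fun h => hw (h ▸ hv)
    have := Finset.card_le_card hsub
    rw [Finset.card_insert_of_notMem (by simp), Finset.card_map, Finset.card_compl,
      Fintype.card_fin, hS] at this
    omega
  · have hsub : (Finset.univ.erase v).map .some ⊆ (G0 k S).neighborFinset (some v) := by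
      intro _ hw
      obtain ⟨u, hu, rfl⟩ := Finset.mem_map.mp hw
      simp only [Function.Embedding.some_apply, SimpleGraph.mem_neighborFinset, G0_adj_some_some]
      exact ⟨(Finset.ne_of_mem_erase hu).symm, fun h => hv h.1⟩
    have := Finset.card_le_card hsub
    rw [Finset.card_map, Finset.card_erase_of_mem (Finset.mem_univ _), Finset.card_univ,
      Fintype.card_fin] at this
    omega

lemma highSet_G0 (hk : 2 ≤ k) (hS : S.card = k) : highSet (G0 k S) k = {none}ᶜ := by
  ext (_ | v)
  · simp only [highSet, Finset.mem_filter, Finset.mem_univ, G0_degree_none hS, true_and,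
      Finset.mem_compl, Finset.mem_singleton, not_true_eq_false, iff_false, not_le]
    omega
  · simpa [highSet] using G0_two_mul_le_degree_some hk hS v

lemma lowSet_G0 (hk : 2 ≤ k) (hS : S.card = k) : lowSet (G0 k S) k = {none} := by
  ext (_ | v)
  · simp only [lowSet, Finset.mem_filter, Finset.mem_univ, G0_degree_none hS, true_and,
      Finset.mem_singleton, iff_true]
    omega
  · have := G0_two_mul_le_degree_some hk hS v
    simp only [lowSet, Finset.mem_filter, Finset.mem_univ, true_and, Finset.mem_singleton,
      reduceCtorEq, iff_false, not_le]
    omega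

lemma G0_not_adj_of_adj_none {a b : Option (Fin (3 * k - 1))} (ha : (G0 k S).Adj none a)
    (hb : (G0 k S).Adj none b) : ¬ (G0 k S).Adj a b := by
  match a, b with
  | some _, some _ => exact fun hab => hab.2 ⟨ha, hb⟩

end G0

/-- `G₀(k)` has `3k` vertices and `|H_k| - |L_k| = 3k - 2`, but no `k` disjoint cycles. -/
theorem G0_example (k : ℕ) (hk : 2 ≤ k) (S : Finset (Fin (3 * k - 1))) (hS : S.card = k) :
    Fintype.card (Option (Fin (3 * k - 1))) = 3 * k ∧
    (highSet (G0 k S) k).card = (lowSet (G0 k S) k).card + (3 * k - 2) ∧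
    ¬ HasDisjointCycles (G0 k S) k := by
  have hV : Fintype.card (Option (Fin (3 * k - 1))) = 3 * k := by
    rw [Fintype.card_option, Fintype.card_fin]
    omega
  refine ⟨hV, ?_, fun h => ?_⟩
  · rw [highSet_G0 hk hS, lowSet_G0 hk hS, Finset.card_compl, hV, Finset.card_singleton]
    omega
  · obtain ⟨u, p, hp, hx⟩ := h.exists_length_eq_three_mem_support hV.le none
    obtain ⟨a, b, ha, hab, hb⟩ := p.exists_adj_adj_adj_of_length_eq_three hp hx
    exact G0_not_adj_of_adj_none ha hb.symm hab
end
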